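/- arXiv:1801.04575 — 2 statements merged into one kernel-verified Lean document; each statement's English description precedes it below -/
import Mathlib

section
/- The modified Lévy distance d_L is a metric on the set Δ⁺ of distance distribution functions; that is, for all F, G, K ∈ Δ⁺: d_L(F,G) ≥ 0, d_L(F,G) = 0 if and only if F = G, d_L(F,G) = d_L(G,F), and d_L(F,K) ≤ d_L(F,G) + d_L(G,K). -/
open Set Filter Topology

/-- A distance distribution function: nondecreasing, left-continuous,
with values in `[0,1]`, and vanishing on `(-∞, 0]`. -/
def IsDDF (F : ℝ → ℝ) : Prop :=
  Monotone F ∧ (∀ x : ℝ, ContinuousWithinAt F (Set.Iio x) x) ∧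
    (∀ x, 0 ≤ F x ∧ F x ≤ 1) ∧ ∀ x ≤ 0, F x = 0

/-- The condition `(F, G; h)` in the definition of the modified Lévy distance. -/
def LevyCond (F G : ℝ → ℝ) (h : ℝ) : Prop :=
  ∀ x ∈ Set.Ioo (-(1 / h)) (1 / h), F (x - h) - h ≤ G x ∧ G x ≤ F (x + h) + h

/-- The modified Lévy distance on `Δ⁺`. -/
noncomputable def dL (F G : ℝ → ℝ) : ℝ :=
  sInf {h : ℝ | h ∈ Set.Ioc (0 : ℝ) 1 ∧ LevyCond F G h ∧ LevyCond G F h}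

/-- The distribution function `H₀`, equal to `0` on `(-∞, 0]` and `1` on `(0, ∞)`. -/
noncomputable def H0 : ℝ → ℝ := fun x => if x ≤ 0 then 0 else 1

/-!
Symmetry is built into the definition and `(F, F; h)` holds for monotone `F`. For the triangle
inequality, `(F, G; h₁)` and `(G, K; h₂)` compose to `(F, K; h₁ + h₂)` whenever `h₁ + h₂ ≤ 1`;
otherwise `d_L(F, K) ≤ 1 < h₁ + h₂` anyway. If `d_L(F, G) = 0`, then `F (x - h) - h ≤ G x` for
arbitrarily small `h > 0`, and left continuity of `F` gives `F x ≤ G x` in the limit.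
-/

def levySet (F G : ℝ → ℝ) : Set ℝ :=
  {h : ℝ | h ∈ Set.Ioc (0 : ℝ) 1 ∧ LevyCond F G h ∧ LevyCond G F h}

section LevyCond

variable {F G K : ℝ → ℝ}

theorem mem_Ioo_neg_one_div_iff {x h : ℝ} : x ∈ Ioo (-(1 / h)) (1 / h) ↔ |x| < 1 / h := by
  rw [mem_Ioo, abs_lt]

theorem levyCond_one (hF : ∀ x, 0 ≤ F x ∧ F x ≤ 1) (hG : ∀ x, 0 ≤ G x ∧ G x ≤ 1) :
    LevyCond F G 1 := fun x _ =>
  ⟨by linarith [(hF (x - 1)).2, (hG x).1], by linarith [(hG x).2, (hF (x + 1)).1]⟩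

theorem levyCond_self (hF : Monotone F) {h : ℝ} (hh : 0 ≤ h) : LevyCond F F h := fun x _ =>
  ⟨by linarith [hF (show x - h ≤ x by linarith)], by linarith [hF (show x ≤ x + h by linarith)]⟩

theorem abs_add_lt_one_div {x a b : ℝ} (ha : 0 < a) (hb : 0 < b) (hab : a + b ≤ 1)
    (hx : |x| < 1 / (a + b)) : |x| + b < 1 / a := by
  rw [lt_div_iff₀ ha]
  rw [lt_div_iff₀ (by linarith)] at hx
  rcases le_or_gt a |x| with hxa | hxa
  · nlinarith
  · nlinarith

theorem LevyCond.trans {h₁ h₂ : ℝ} (hp₁ : 0 < h₁) (hp₂ : 0 < h₂) (hs : h₁ + h₂ ≤ 1)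
    (hFG : LevyCond F G h₁) (hGK : LevyCond G K h₂) : LevyCond F K (h₁ + h₂) := by
  intro x hx
  rw [mem_Ioo_neg_one_div_iff] at hx
  have hx₂ : |x| < 1 / h₂ :=
    hx.trans_le (one_div_le_one_div_of_le hp₂ (by linarith))
  have hshift : ∀ y, |y - x| ≤ h₂ → |y| < 1 / h₁ := fun y hy => by
    have := abs_add_lt_one_div hp₁ hp₂ hs hx
    linarith [abs_sub_abs_le_abs_sub y x]
  obtain ⟨hK₁, hK₂⟩ := hGK x (mem_Ioo_neg_one_div_iff.2 hx₂)
  have hG₁ := (hFG (x - h₂) (mem_Ioo_neg_one_div_iff.2 (hshift _ (by simp [abs_of_pos hp₂])))).1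
  have hG₂ := (hFG (x + h₂) (mem_Ioo_neg_one_div_iff.2 (hshift _ (by simp [abs_of_pos hp₂])))).2
  rw [sub_sub, add_comm h₂] at hG₁
  rw [add_assoc, add_comm h₂] at hG₂
  constructor <;> linarith

theorem le_of_frequently_levyCond {x : ℝ} (hF : ContinuousWithinAt F (Iio x) x)
    (hfreq : ∃ᶠ h in 𝓝[>] 0, LevyCond F G h) : F x ≤ G x := by
  have hshift : Tendsto (fun h => x - h) (𝓝[>] 0) (𝓝[<] x) := by
    refine tendsto_nhdsWithin_of_tendsto_nhds_of_eventually_within _ ?_ ?_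
    · exact ((continuous_sub_left x).tendsto' 0 x (sub_zero x)).mono_left nhdsWithin_le_nhds
    · filter_upwards [self_mem_nhdsWithin] with h hh using sub_lt_self x hh
  have hlim : Tendsto (fun h => F (x - h) - h) (𝓝[>] 0) (𝓝 (F x)) := by
    simpa using (hF.tendsto.comp hshift).sub (tendsto_nhdsWithin_of_tendsto_nhds tendsto_id)
  have hsmall : ∀ᶠ h in 𝓝[>] (0 : ℝ), |x| < 1 / h := by
    simpa using tendsto_inv_nhdsGT_zero.eventually_gt_atTop |x|
  refine isClosed_Iic.mem_of_frequently_of_tendsto ?_ hlim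
  exact (hfreq.and_eventually hsmall).mono fun h ⟨hc, hx⟩ =>
    (hc x (mem_Ioo_neg_one_div_iff.2 hx)).1

end LevyCond

section dL

variable {F G K : ℝ → ℝ}

theorem levySet_comm (F G : ℝ → ℝ) : levySet F G = levySet G F := by
  ext h
  simp only [levySet, mem_ofPred_eq]
  tauto

theorem dL_comm (F G : ℝ → ℝ) : dL F G = dL G F :=
  congrArg sInf (levySet_comm F G)

theorem dL_nonneg (F G : ℝ → ℝ) : 0 ≤ dL F G :=
  Real.sInf_nonneg fun _ hh => hh.1.1.le

theorem dL_le_of_mem {h : ℝ} (hh : h ∈ levySet F G) : dL F G ≤ h :=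
  csInf_le ⟨0, fun _ h' => h'.1.1.le⟩ hh

theorem one_mem_levySet (hF : ∀ x, 0 ≤ F x ∧ F x ≤ 1) (hG : ∀ x, 0 ≤ G x ∧ G x ≤ 1) :
    1 ∈ levySet F G :=
  ⟨⟨one_pos, le_rfl⟩, levyCond_one hF hG, levyCond_one hG hF⟩

theorem dL_self (hF : Monotone F) : dL F F = 0 := by
  have hset : levySet F F = Ioc 0 1 := by
    ext h
    simp only [levySet, mem_ofPred_eq, and_self, and_iff_left_iff_imp]
    exact fun hh => levyCond_self hF hh.1.le
  rw [dL, ← levySet, hset, csInf_Ioc one_pos]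

theorem add_mem_levySet {h₁ h₂ : ℝ} (hs : h₁ + h₂ ≤ 1) (h₁_mem : h₁ ∈ levySet F G)
    (h₂_mem : h₂ ∈ levySet G K) : h₁ + h₂ ∈ levySet F K := by
  obtain ⟨⟨hp₁, -⟩, hFG, hGF⟩ := h₁_mem
  obtain ⟨⟨hp₂, -⟩, hGK, hKG⟩ := h₂_mem
  refine ⟨⟨by linarith, hs⟩, hFG.trans hp₁ hp₂ hs hGK, ?_⟩
  rw [add_comm] at hs ⊢
  exact hKG.trans hp₂ hp₁ hs hGF

theorem dL_triangle (hF : ∀ x, 0 ≤ F x ∧ F x ≤ 1) (hG : ∀ x, 0 ≤ G x ∧ G x ≤ 1)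
    (hK : ∀ x, 0 ≤ K x ∧ K x ≤ 1) : dL F K ≤ dL F G + dL G K := by
  have hsum : ∀ h₁ ∈ levySet F G, ∀ h₂ ∈ levySet G K, dL F K ≤ h₁ + h₂ := by
    intro h₁ h₁_mem h₂ h₂_mem
    rcases le_or_gt (h₁ + h₂) 1 with hs | hs
    · exact dL_le_of_mem (add_mem_levySet hs h₁_mem h₂_mem)
    · exact (dL_le_of_mem (one_mem_levySet hF hK)).trans hs.le
  have hdiff : ∀ h₂ ∈ levySet G K, dL F K - h₂ ≤ dL F G := fun h₂ h₂_mem =>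
    le_csInf ⟨1, one_mem_levySet hF hG⟩ fun h₁ h₁_mem => by
      linarith [hsum h₁ h₁_mem h₂ h₂_mem]
  have : dL F K - dL F G ≤ dL G K :=
    le_csInf ⟨1, one_mem_levySet hG hK⟩ fun h₂ h₂_mem => by linarith [hdiff h₂ h₂_mem]
  linarith

theorem frequently_mem_levySet_of_dL_eq_zero (hne : (levySet F G).Nonempty)
    (h0 : dL F G = 0) : ∃ᶠ h in 𝓝[>] 0, h ∈ levySet F G := by
  rw [frequently_iff]
  intro U hU
  obtain ⟨ε, hε, hεU⟩ := mem_nhdsGT_iff_exists_Ioo_subset.1 hU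
  obtain ⟨h, hh, hhε⟩ := exists_lt_of_csInf_lt hne (h0.trans_lt hε)
  exact ⟨h, hεU ⟨hh.1.1, hhε⟩, hh⟩

theorem le_of_dL_eq_zero {x : ℝ} (hF : ContinuousWithinAt F (Iio x) x)
    (hne : (levySet F G).Nonempty) (h0 : dL F G = 0) : F x ≤ G x :=
  le_of_frequently_levyCond hF
    ((frequently_mem_levySet_of_dL_eq_zero hne h0).mono fun _ hh => hh.2.1)

end dL

/-- The modified Lévy distance `d_L` is a metric on `Δ⁺`. -/
theorem dL_isMetric (F G K : ℝ → ℝ) (hF : IsDDF F) (hG : IsDDF G) (hK : IsDDF K) :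
    0 ≤ dL F G ∧ (dL F G = 0 ↔ F = G) ∧ dL F G = dL G F ∧ dL F K ≤ dL F G + dL G K := by
  refine ⟨dL_nonneg F G, ⟨fun h0 => ?_, ?_⟩, dL_comm F G, dL_triangle hF.2.2.1 hG.2.2.1 hK.2.2.1⟩
  · have hne : (levySet F G).Nonempty := ⟨1, one_mem_levySet hF.2.2.1 hG.2.2.1⟩
    have h0' : dL G F = 0 := dL_comm F G ▸ h0
    refine funext fun x => (le_of_dL_eq_zero (hF.2.1 x) hne h0).antisymm ?_
    exact le_of_dL_eq_zero (hG.2.1 x) (levySet_comm F G ▸ hne) h0'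
  · rintro rfl
    exact dL_self hF.1
end

section
/- Let (S, 𝓕, τ) be a probabilistic metric space under a continuous triangle function τ, and let A, B be nonempty subsets of S. If A ∩ B is nonempty, then D_{A∪B} ≥ τ(D_A, D_B) pointwise. -/
open Set Filter Topology

/-- A triangle function: a binary operation on `Δ⁺` that is commutative, associative,
nondecreasing in each argument, and has `H₀` as identity. -/
def IsTriangleFunction (τ : (ℝ → ℝ) → (ℝ → ℝ) → (ℝ → ℝ)) : Prop :=
  (∀ F G, IsDDF F → IsDDF G → IsDDF (τ F G)) ∧
  (∀ F G, IsDDF F → IsDDF G → τ F G = τ G F) ∧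
  (∀ F G K, IsDDF F → IsDDF G → IsDDF K → τ (τ F G) K = τ F (τ G K)) ∧
  (∀ F G K, IsDDF F → IsDDF G → IsDDF K → F ≤ G → τ F K ≤ τ G K) ∧
  (∀ F, IsDDF F → τ H0 F = F)

/-- Continuity of a triangle function with respect to the modified Lévy metric on `Δ⁺`
(sequential continuity, which is equivalent since `d_L` is a metric). -/
def ContinuousTF (τ : (ℝ → ℝ) → (ℝ → ℝ) → (ℝ → ℝ)) : Prop :=
  ∀ (F G : ℕ → ℝ → ℝ) (F₀ G₀ : ℝ → ℝ),
    (∀ n, IsDDF (F n)) → (∀ n, IsDDF (G n)) → IsDDF F₀ → IsDDF G₀ →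
    Filter.Tendsto (fun n => dL (F n) F₀) Filter.atTop (nhds 0) →
    Filter.Tendsto (fun n => dL (G n) G₀) Filter.atTop (nhds 0) →
    Filter.Tendsto (fun n => dL (τ (F n) (G n)) (τ F₀ G₀)) Filter.atTop (nhds 0)

/-- `(S, 𝓕, τ)` is a probabilistic metric space. -/
structure IsPMSpace {S : Type*} (𝓕 : S → S → ℝ → ℝ)
    (τ : (ℝ → ℝ) → (ℝ → ℝ) → (ℝ → ℝ)) : Prop where
  ddf : ∀ p q, IsDDF (𝓕 p q)
  tf : IsTriangleFunction τ
  refl : ∀ p, 𝓕 p p = H0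
  ne : ∀ p q, p ≠ q → 𝓕 p q ≠ H0
  symm : ∀ p q, 𝓕 p q = 𝓕 q p
  tri : ∀ p q r, τ (𝓕 p q) (𝓕 q r) ≤ 𝓕 p r

/-- The probabilistic diameter of a set: `D_A(x) = sup_{t<x} inf_{p,q ∈ A} F_{p,q}(t)`
for `x > 0`, and `0` for `x ≤ 0`. -/
noncomputable def probDiam {S : Type*} (𝓕 : S → S → ℝ → ℝ) (A : Set S) (x : ℝ) : ℝ :=
  if x ≤ 0 then 0
  else sSup ((fun t => sInf ((fun pq : S × S => 𝓕 pq.1 pq.2 t) '' (A ×ˢ A))) '' Set.Iio x)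

/-!
Fix `c ∈ A ∩ B`. For `p ∈ A`, `q ∈ B` the triangle inequality through `c` gives
`τ(D_A, D_B) ≤ τ(F_{p,c}, F_{c,q}) ≤ F_{p,q}`, while for pairs inside `A` (or `B`) one uses
`τ(D_A, D_B) ≤ τ(D_A, H₀) = D_A ≤ F_{p,q}`. So `τ(D_A, D_B)` lies below every `F_{p,q}` on `A ∪ B`,
and a left-continuous function below all `F_{p,q}` on a set lies below its diameter, which is the
left limit of `t ↦ inf_{p,q} F_{p,q}(t)`.
-/

open Function

lemma isDDF_H0 : IsDDF H0 := by
  refine ⟨fun a b hab => ?_, fun x => ?_, fun x => ?_, fun x hx => if_pos hx⟩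
  · unfold H0; split_ifs <;> linarith
  · rcases le_or_gt x 0 with hx | hx
    · have hconst : ContinuousOn H0 (Iic 0) :=
        continuousOn_const.congr fun t (ht : t ≤ 0) => if_pos ht
      exact (hconst x hx).mono (Iio_subset_Iic_self.trans (Iic_subset_Iic.2 hx))
    · have hconst : ContinuousOn H0 (Ioi 0) :=
        continuousOn_const.congr fun t (ht : 0 < t) => if_neg ht.not_ge
      exact (hconst.continuousAt (Ioi_mem_nhds hx)).continuousWithinAt
  · unfold H0; split_ifs <;> norm_num

lemma IsDDF.le_H0 {F : ℝ → ℝ} (hF : IsDDF F) : F ≤ H0 := by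
  intro x
  rcases le_or_gt x 0 with hx | hx
  · simp [H0, hx, hF.2.2.2 x hx]
  · simpa [H0, not_le.2 hx] using (hF.2.2.1 x).2

namespace IsTriangleFunction

variable {τ : (ℝ → ℝ) → (ℝ → ℝ) → (ℝ → ℝ)} (hτ : IsTriangleFunction τ)
  {F G F' G' : ℝ → ℝ}
include hτ

lemma isDDF (hF : IsDDF F) (hG : IsDDF G) : IsDDF (τ F G) := hτ.1 F G hF hG

lemma mono (hF : IsDDF F) (hG : IsDDF G) (hF' : IsDDF F') (hG' : IsDDF G')
    (hFF' : F ≤ F') (hGG' : G ≤ G') : τ F G ≤ τ F' G' :=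
  calc τ F G ≤ τ F' G := hτ.2.2.2.1 F F' G hF hF' hG hFF'
    _ = τ G F' := hτ.2.1 F' G hF' hG
    _ ≤ τ G' F' := hτ.2.2.2.1 G G' F' hG hG' hF' hGG'
    _ = τ F' G' := hτ.2.1 G' F' hG' hF'

lemma le_right (hF : IsDDF F) (hG : IsDDF G) : τ F G ≤ G :=
  calc τ F G ≤ τ H0 G := hτ.mono hF hG isDDF_H0 hG hF.le_H0 le_rfl
    _ = G := hτ.2.2.2.2 G hG

lemma le_left (hF : IsDDF F) (hG : IsDDF G) : τ F G ≤ F :=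
  hτ.2.1 F G hF hG ▸ hτ.le_right hG hF

end IsTriangleFunction

lemma IsPMSpace.triangle_le {S : Type*} {𝓕 : S → S → ℝ → ℝ}
    {τ : (ℝ → ℝ) → (ℝ → ℝ) → (ℝ → ℝ)} (hPM : IsPMSpace 𝓕 τ) {F G : ℝ → ℝ}
    (hF : IsDDF F) (hG : IsDDF G) {p q r : S} (hFpq : F ≤ 𝓕 p q) (hGqr : G ≤ 𝓕 q r) :
    τ F G ≤ 𝓕 p r :=
  (hPM.tf.mono hF hG (hPM.ddf p q) (hPM.ddf q r) hFpq hGqr).trans (hPM.tri p q r)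

section ProbDiam

variable {S : Type*} {𝓕 : S → S → ℝ → ℝ} {A : Set S}

noncomputable def pairwiseInf (𝓕 : S → S → ℝ → ℝ) (A : Set S) (t : ℝ) : ℝ :=
  sInf ((fun pq : S × S => 𝓕 pq.1 pq.2 t) '' (A ×ˢ A))

lemma pairwiseInf_le (h𝓕 : ∀ p q, IsDDF (𝓕 p q)) {p q : S} (hp : p ∈ A) (hq : q ∈ A)
    (t : ℝ) : pairwiseInf 𝓕 A t ≤ 𝓕 p q t := by
  refine csInf_le ⟨0, ?_⟩ (mem_image_of_mem _ (mk_mem_prod hp hq))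
  rintro _ ⟨⟨p', q'⟩, -, rfl⟩
  exact ((h𝓕 p' q').2.2.1 t).1

lemma le_pairwiseInf (hA : A.Nonempty) {c t : ℝ} (h : ∀ p ∈ A, ∀ q ∈ A, c ≤ 𝓕 p q t) :
    c ≤ pairwiseInf 𝓕 A t := by
  refine le_csInf ((hA.prod hA).image _) ?_
  rintro _ ⟨⟨p, q⟩, ⟨hp, hq⟩, rfl⟩
  exact h p hp q hq

lemma monotone_pairwiseInf (h𝓕 : ∀ p q, IsDDF (𝓕 p q)) (hA : A.Nonempty) :
    Monotone (pairwiseInf 𝓕 A) := fun _ _ hst =>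
  le_pairwiseInf hA fun p hp q hq => (pairwiseInf_le h𝓕 hp hq _).trans ((h𝓕 p q).1 hst)

lemma pairwiseInf_eq_zero (h𝓕 : ∀ p q, IsDDF (𝓕 p q)) (hA : A.Nonempty) {t : ℝ}
    (ht : t ≤ 0) : pairwiseInf 𝓕 A t = 0 := by
  obtain ⟨a, ha⟩ := hA
  refine le_antisymm ?_ (le_pairwiseInf ⟨a, ha⟩ fun p _ q _ => ((h𝓕 p q).2.2.1 t).1)
  exact (pairwiseInf_le h𝓕 ha ha t).trans ((h𝓕 a a).2.2.2 t ht).le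

lemma pairwiseInf_le_one (h𝓕 : ∀ p q, IsDDF (𝓕 p q)) (hA : A.Nonempty) (t : ℝ) :
    pairwiseInf 𝓕 A t ≤ 1 := by
  obtain ⟨a, ha⟩ := hA
  exact (pairwiseInf_le h𝓕 ha ha t).trans ((h𝓕 a a).2.2.1 t).2

lemma probDiam_eq_leftLim (h𝓕 : ∀ p q, IsDDF (𝓕 p q)) (hA : A.Nonempty) :
    probDiam 𝓕 A = leftLim (pairwiseInf 𝓕 A) := by
  have hmono := monotone_pairwiseInf h𝓕 hA
  ext x
  rcases le_or_gt x 0 with hx | hx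
  · rw [probDiam, if_pos hx]
    refine le_antisymm ?_ ?_
    · rw [← pairwiseInf_eq_zero h𝓕 hA (by linarith : x - 1 ≤ 0)]
      exact hmono.le_leftLim (by linarith)
    · exact (hmono.leftLim_le le_rfl).trans (pairwiseInf_eq_zero h𝓕 hA hx).le
  · rw [probDiam, if_neg hx.not_ge, hmono.leftLim_eq_sSup]
    rfl

lemma isDDF_probDiam (h𝓕 : ∀ p q, IsDDF (𝓕 p q)) (hA : A.Nonempty) :
    IsDDF (probDiam 𝓕 A) := by
  have hmono := monotone_pairwiseInf h𝓕 hA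
  refine ⟨?_, fun x => ?_, fun x => ⟨?_, ?_⟩, fun x hx => if_pos hx⟩ <;>
    rw [probDiam_eq_leftLim h𝓕 hA]
  · exact hmono.leftLim
  · exact (continuousWithinAt_leftLim_Iic (hmono.tendsto_leftLim x)).mono Iio_subset_Iic_self
  · calc (0 : ℝ) = pairwiseInf 𝓕 A (min x 0 - 1) :=
          (pairwiseInf_eq_zero h𝓕 hA (by linarith [min_le_right x 0])).symm
      _ ≤ leftLim (pairwiseInf 𝓕 A) x := hmono.le_leftLim (by linarith [min_le_left x 0])
  · exact (hmono.leftLim_le le_rfl).trans (pairwiseInf_le_one h𝓕 hA x)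

lemma probDiam_le (h𝓕 : ∀ p q, IsDDF (𝓕 p q)) {p q : S} (hp : p ∈ A) (hq : q ∈ A) :
    probDiam 𝓕 A ≤ 𝓕 p q := by
  rw [probDiam_eq_leftLim h𝓕 ⟨p, hp⟩]
  exact fun x => ((monotone_pairwiseInf h𝓕 ⟨p, hp⟩).leftLim_le le_rfl).trans
    (pairwiseInf_le h𝓕 hp hq x)

lemma le_probDiam (h𝓕 : ∀ p q, IsDDF (𝓕 p q)) (hA : A.Nonempty) {G : ℝ → ℝ} (hG : IsDDF G)
    (h : ∀ p ∈ A, ∀ q ∈ A, G ≤ 𝓕 p q) : G ≤ probDiam 𝓕 A := by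
  rw [probDiam_eq_leftLim h𝓕 hA]
  intro x
  exact le_of_tendsto_of_tendsto' (hG.2.1 x) ((monotone_pairwiseInf h𝓕 hA).tendsto_leftLim x)
    fun t => le_pairwiseInf hA fun p hp q hq => h p hp q hq t

end ProbDiam

theorem probDiam_union_general {S : Type*}
    (𝓕 : S → S → ℝ → ℝ) (τ : (ℝ → ℝ) → (ℝ → ℝ) → (ℝ → ℝ))
    (hPM : IsPMSpace 𝓕 τ) (A B : Set S)
    (hAB : (A ∩ B).Nonempty) :
    τ (probDiam 𝓕 A) (probDiam 𝓕 B) ≤ probDiam 𝓕 (A ∪ B) := by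
  obtain ⟨c, hcA, hcB⟩ := hAB
  have hDA := isDDF_probDiam hPM.ddf ⟨c, hcA⟩
  have hDB := isDDF_probDiam hPM.ddf ⟨c, hcB⟩
  refine le_probDiam hPM.ddf ⟨c, Or.inl hcA⟩ (hPM.tf.isDDF hDA hDB) ?_
  rintro p (hp | hp) q (hq | hq)
  · exact (hPM.tf.le_left hDA hDB).trans (probDiam_le hPM.ddf hp hq)
  · exact hPM.triangle_le hDA hDB (probDiam_le hPM.ddf hp hcA) (probDiam_le hPM.ddf hcB hq)
  · rw [hPM.symm]
    exact hPM.triangle_le hDA hDB (probDiam_le hPM.ddf hq hcA) (probDiam_le hPM.ddf hcB hp)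
  · exact (hPM.tf.le_right hDA hDB).trans (probDiam_le hPM.ddf hp hq)

/-- In a PM space with continuous triangle function, if `A ∩ B ≠ ∅`,
then `D_{A ∪ B} ≥ τ(D_A, D_B)` pointwise. -/
theorem probDiam_union {S : Type*} [Nonempty S]
    (𝓕 : S → S → ℝ → ℝ) (τ : (ℝ → ℝ) → (ℝ → ℝ) → (ℝ → ℝ))
    (hPM : IsPMSpace 𝓕 τ) (hτ : ContinuousTF τ) (A B : Set S)
    (hA : A.Nonempty) (hB : B.Nonempty) (hAB : (A ∩ B).Nonempty) :
    τ (probDiam 𝓕 A) (probDiam 𝓕 B) ≤ probDiam 𝓕 (A ∪ B) :=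
  probDiam_union_general 𝓕 τ hPM A B hAB
end
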